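/- Let f : ℝⁿ → ℝ be differentiable with ∇f L-Lipschitz, and suppose f is μ-strongly star-convex with star center ω* satisfying f(ω*) ≤ f(ω̃) − (μ/2)‖ω* − ω̃‖² for all ω̃. Then gradient descent with step size η ≤ 1/L, ω_{k+1} = ω_k − η∇f(ω_k), satisfies ‖ω_{k+1} − ω*‖² ≤ (1 − ημ)‖ω_k − ω*‖², i.e., the iterates converge linearly to ω*. -/

import Mathlib

set_option maxHeartbeats 1000000

open RealInnerProductSpace intervalIntegral

section aux
variable {n : ℕ}
local notation "E" => EuclideanSpace ℝ (Fin n)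

lemma grad_cont (f : E → ℝ) (L : ℝ) (hL : 0 ≤ L)
    (hLip : ∀ x y, ‖gradient f x - gradient f y‖ ≤ L * ‖x - y‖) :
    Continuous (gradient f) := by
  refine (LipschitzWith.of_dist_le_mul (K := ⟨L, hL⟩) ?_).continuous
  intro x y
  have := hLip x y
  rw [dist_eq_norm, dist_eq_norm]
  exact this

lemma descent (f : E → ℝ) (L : ℝ) (hL : 0 ≤ L) (hdiff : Differentiable ℝ f)
    (hLip : ∀ x y, ‖gradient f x - gradient f y‖ ≤ L * ‖x - y‖) (x y : E) :
    f y ≤ f x + ⟪gradient f x, y - x⟫ + L / 2 * ‖y - x‖ ^ 2 := by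
  set c : ℝ → E := fun t => x + t • (y - x) with hc
  have hcderiv : ∀ t : ℝ, HasDerivAt c (y - x) t := by
    intro t
    have := ((hasDerivAt_id t).smul_const (y - x)).const_add x
    rw [one_smul] at this
    exact this
  set φ' : ℝ → ℝ := fun t => ⟪gradient f (c t), y - x⟫ with hφ'
  have hφderiv : ∀ t : ℝ, HasDerivAt (fun s => f (c s)) (φ' t) t := by
    intro t
    have h1 : HasFDerivAt f (InnerProductSpace.toDual ℝ E (gradient f (c t))) (c t) :=
      (hdiff (c t)).hasGradientAt.hasFDerivAt
    have h2 := (h1.comp_hasDerivAt t (hcderiv t))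
    simp [hφ'] at h2 ⊢
    exact h2
  have hcont : Continuous φ' := by
    exact (((grad_cont f L hL hLip).comp (by continuity)).inner continuous_const)
  have hFTC : ∫ t in (0:ℝ)..1, φ' t = f (c 1) - f (c 0) :=
    integral_eq_sub_of_hasDerivAt (fun t _ => hφderiv t)
      (hcont.intervalIntegrable 0 1)
  have hc0 : c 0 = x := by simp [hc]
  have hc1 : c 1 = y := by simp [hc]
  have hbound : ∫ t in (0:ℝ)..1, φ' t ≤
      ∫ t in (0:ℝ)..1, (⟪gradient f x, y - x⟫ + L * t * ‖y - x‖ ^ 2) := by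
    apply integral_mono_on (by norm_num) (hcont.intervalIntegrable 0 1)
      ((by continuity : Continuous fun t : ℝ => ⟪gradient f x, y - x⟫ + L * t * ‖y - x‖ ^ 2).intervalIntegrable 0 1)
    intro t ht
    rcases ht with ⟨ht0, ht1⟩
    have : φ' t - ⟪gradient f x, y - x⟫ = ⟪gradient f (c t) - gradient f x, y - x⟫ := by
      simp only [hφ', inner_sub_left]
    have hCS : ⟪gradient f (c t) - gradient f x, y - x⟫ ≤
        ‖gradient f (c t) - gradient f x‖ * ‖y - x‖ := real_inner_le_norm _ _
    have hlip' : ‖gradient f (c t) - gradient f x‖ ≤ L * (t * ‖y - x‖) := by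
      have := hLip (c t) x
      simpa [hc, norm_smul, abs_of_nonneg ht0] using this
    nlinarith [norm_nonneg (y - x), norm_nonneg (gradient f (c t) - gradient f x),
      mul_le_mul_of_nonneg_right hlip' (norm_nonneg (y - x))]
  have hval : ∫ t in (0:ℝ)..1, (⟪gradient f x, y - x⟫ + L * t * ‖y - x‖ ^ 2)
      = ⟪gradient f x, y - x⟫ + L / 2 * ‖y - x‖ ^ 2 := by
    rw [integral_add (intervalIntegrable_const) ?_]
    · rw [integral_const]
      have : ∫ t in (0:ℝ)..1, L * t * ‖y - x‖ ^ 2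
          = (L * ‖y - x‖ ^ 2) * ∫ t in (0:ℝ)..1, t := by
        rw [← integral_const_mul]; congr 1; ext t; ring
      rw [this, integral_id]; norm_num; ring
    · exact (by continuity : Continuous fun t : ℝ => L * t * ‖y - x‖ ^ 2).intervalIntegrable 0 1
  rw [hc0, hc1] at hFTC
  linarith [hbound.trans_eq hval]

end aux

theorem stmt_9 {n : ℕ} (f : EuclideanSpace ℝ (Fin n) → ℝ)
    (ωs : EuclideanSpace ℝ (Fin n)) (μ L η : ℝ)
    (hμ : 0 < μ) (hμL : μ ≤ L)
    (hdiff : Differentiable ℝ f)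
    (hLip : ∀ x y, ‖gradient f x - gradient f y‖ ≤ L * ‖x - y‖)
    (hssc : ∀ ω, f ωs ≥ f ω + ⟪gradient f ω, ωs - ω⟫ + μ / 2 * ‖ωs - ω‖ ^ 2)
    (henv : ∀ ω, f ωs ≤ f ω - μ / 2 * ‖ωs - ω‖ ^ 2)
    (hη : 0 < η) (hηL : η ≤ 1 / L)
    (ω : ℕ → EuclideanSpace ℝ (Fin n))
    (hiter : ∀ k, ω (k + 1) = ω k - η • gradient f (ω k)) :
    ∀ k, ‖ω (k + 1) - ωs‖ ^ 2 ≤ (1 - η * μ) * ‖ω k - ωs‖ ^ 2 := by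
  intro k
  have hL : 0 < L := lt_of_lt_of_le hμ hμL
  have hηL' : η * L ≤ 1 := by
    rw [le_div_iff₀ hL] at hηL; linarith
  set x := ω k with hx
  set g := gradient f x with hg
  -- star convexity
  have h1 : ⟪g, ωs - x⟫ ≤ f ωs - f x - μ / 2 * ‖ωs - x‖ ^ 2 := by
    have := hssc x; linarith
  -- descent lemma at y = x - η • g
  have h2 : f (x - η • g) ≤ f x - η * ‖g‖ ^ 2 + L / 2 * (η ^ 2 * ‖g‖ ^ 2) := by
    have h := descent f L hL.le hdiff hLip x (x - η • g)
    have e1 : x - η • g - x = -(η • g) := by abel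
    rw [e1] at h
    have e2 : ⟪g, -(η • g)⟫ = -(η * ‖g‖ ^ 2) := by
      rw [inner_neg_right, real_inner_smul_right, real_inner_self_eq_norm_sq]
    have e3 : ‖-(η • g)‖ ^ 2 = η ^ 2 * ‖g‖ ^ 2 := by
      rw [norm_neg, norm_smul, mul_pow, Real.norm_eq_abs, sq_abs]
    rw [e2, e3] at h
    linarith
  have h3 : f ωs ≤ f (x - η • g) := by
    have := henv (x - η • g)
    nlinarith [sq_nonneg ‖ωs - (x - η • g)‖, hμ]
  -- gradient norm bound: η^2 ‖g‖^2 ≤ 2 η (f x - f ωs)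
  have h4 : η ^ 2 * ‖g‖ ^ 2 ≤ 2 * η * (f x - f ωs) := by
    nlinarith [sq_nonneg ‖g‖, hη, mul_le_mul_of_nonneg_right hηL'
      (mul_nonneg hη.le (sq_nonneg ‖g‖))]
  -- expansion of the square
  have hexp : ‖ω (k + 1) - ωs‖ ^ 2
      = ‖x - ωs‖ ^ 2 - 2 * (η * ⟪x - ωs, g⟫) + η ^ 2 * ‖g‖ ^ 2 := by
    rw [hiter k]
    have e1 : x - η • g - ωs = (x - ωs) - η • g := by abel
    rw [e1, norm_sub_sq_real, real_inner_smul_right, norm_smul, mul_pow,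
      Real.norm_eq_abs, sq_abs]
  have hsym : ⟪x - ωs, g⟫ = -⟪g, ωs - x⟫ := by
    rw [real_inner_comm]
    have : ωs - x = -(x - ωs) := by abel
    rw [this, inner_neg_right, neg_neg]
  have hnormsym : ‖ωs - x‖ = ‖x - ωs‖ := norm_sub_rev _ _
  rw [hexp, hsym]
  rw [hnormsym] at h1
  nlinarith [h1, h4, mul_le_mul_of_nonneg_left h1 (by linarith : (0:ℝ) ≤ 2 * η)]
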